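/- arXiv:2202.09222 — 5 statements merged into one kernel-verified Lean document; each statement's English description precedes it below -/
import Mathlib

section
/- Let n ≥ 2 and suppose levels l_1, ..., l_n of leaves in a full binary tree include two sibling leaves at level l_max and a leaf at level l_min with l_max > l_min. Replacing these three leaves with one leaf at level l_max − 1 and two leaves at level l_min + 1 (keeping the other n − 3 leaves fixed) changes the quantity (1/n) Σ_i 2^{l_i} by exactly −(3/n)(2^{l_max − 1} − 2^{l_min}), which is nonpositive, and is zero iff l_min = l_max − 1. -/
/-!
The sum `Σ 2^{l_i}` changes only in the three removed and three added terms, so the difference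
is `2·2^{lmax} + 2^{lmin} - 2^{lmax-1} - 2·2^{lmin+1} = 3·(2^{lmax-1} - 2^{lmin})`, using
`2^{lmax} = 2·2^{lmax-1}` (valid as `lmax > 0`). Since `lmin ≤ lmax - 1` and `k ↦ 2^k` is
strictly increasing, this is nonnegative and vanishes exactly when `lmin = lmax - 1`.
-/

theorem Multiset.sum_map_sub_sum_map_tsub_add {α G : Type*} [DecidableEq α] [AddCommGroup G]
    (f : α → G) {s L : Multiset α} (hs : s ≤ L) (t : Multiset α) :
    (L.map f).sum - ((L - s + t).map f).sum = (s.map f).sum - (t.map f).sum := by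
  obtain ⟨u, rfl⟩ := le_iff_exists_add.1 hs
  simp only [add_tsub_cancel_left, Multiset.map_add, Multiset.sum_add]
  abel

theorem two_pow_balance_sub {lmax : ℕ} (hmax : 0 < lmax) (lmin : ℕ) :
    ((2 : ℝ) ^ lmax + (2 ^ lmax + 2 ^ lmin)) - (2 ^ (lmax - 1) + (2 ^ (lmin + 1) + 2 ^ (lmin + 1)))
      = 3 * (2 ^ (lmax - 1) - 2 ^ lmin) := by
  obtain ⟨k, rfl⟩ := Nat.exists_eq_add_of_lt hmax
  simp only [Nat.add_sub_cancel, pow_succ]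
  ring

theorem two_pow_sub_two_pow_nonneg {a b : ℕ} (hab : a ≤ b) : 0 ≤ (2 : ℝ) ^ b - 2 ^ a :=
  sub_nonneg.2 (pow_le_pow_right₀ one_le_two hab)

theorem two_pow_sub_two_pow_eq_zero_iff {a b : ℕ} : (2 : ℝ) ^ b - 2 ^ a = 0 ↔ a = b := by
  rw [sub_eq_zero, pow_right_inj₀ two_pos (by norm_num), eq_comm]

theorem balancing_operation_decreases_mean_general
    (n : ℕ) (hn : 2 ≤ n) (L : Multiset ℕ)
    (lmax lmin : ℕ) (hlt : lmin < lmax)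
    (hsub : ({lmax, lmax, lmin} : Multiset ℕ) ≤ L)
    (L' : Multiset ℕ)
    (hL' : L' = (L - {lmax, lmax, lmin}) + {lmax - 1, lmin + 1, lmin + 1}) :
    (L.map (fun l => (2 : ℝ) ^ l)).sum / n - (L'.map (fun l => (2 : ℝ) ^ l)).sum / n
        = (3 / n) * ((2 : ℝ) ^ (lmax - 1) - 2 ^ lmin) ∧
    0 ≤ (3 / (n : ℝ)) * ((2 : ℝ) ^ (lmax - 1) - 2 ^ lmin) ∧
    ((3 / (n : ℝ)) * ((2 : ℝ) ^ (lmax - 1) - 2 ^ lmin) = 0 ↔ lmin = lmax - 1) := by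
  have hn0 : (3 / (n : ℝ)) ≠ 0 := div_ne_zero three_ne_zero (by positivity)
  have hle : lmin ≤ lmax - 1 := by omega
  refine ⟨?_, ?_, ?_⟩
  · rw [← sub_div, hL', Multiset.sum_map_sub_sum_map_tsub_add _ hsub]
    simp only [Multiset.insert_eq_cons, Multiset.map_cons, Multiset.sum_cons,
      Multiset.map_singleton, Multiset.sum_singleton]
    rw [two_pow_balance_sub (by omega)]
    ring
  · exact mul_nonneg (by positivity) (two_pow_sub_two_pow_nonneg hle)
  · rw [mul_eq_zero, or_iff_right hn0, two_pow_sub_two_pow_eq_zero_iff]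

/-- The balancing operation: replacing two sibling leaves at level `lmax` and a leaf at
level `lmin < lmax` by one leaf at level `lmax - 1` and two leaves at level `lmin + 1`
changes `S = (1/n) Σ 2^{l_i}` by exactly `-(3/n)(2^{lmax-1} - 2^{lmin})`, which is
nonpositive, and is zero iff `lmin = lmax - 1`. -/
theorem balancing_operation_decreases_mean
    (n : ℕ) (hn : 2 ≤ n) (L : Multiset ℕ) (hpos : ∀ l ∈ L, 1 ≤ l)
    (hcard : L.card = n)
    (lmax lmin : ℕ) (hlt : lmin < lmax)
    (hsub : ({lmax, lmax, lmin} : Multiset ℕ) ≤ L)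
    (L' : Multiset ℕ)
    (hL' : L' = (L - {lmax, lmax, lmin}) + {lmax - 1, lmin + 1, lmin + 1}) :
    (L.map (fun l => (2 : ℝ) ^ l)).sum / n - (L'.map (fun l => (2 : ℝ) ^ l)).sum / n
        = (3 / n) * ((2 : ℝ) ^ (lmax - 1) - 2 ^ lmin) ∧
    0 ≤ (3 / (n : ℝ)) * ((2 : ℝ) ^ (lmax - 1) - 2 ^ lmin) ∧
    ((3 / (n : ℝ)) * ((2 : ℝ) ^ (lmax - 1) - 2 ^ lmin) = 0 ↔ lmin = lmax - 1) :=
  balancing_operation_decreases_mean_general n hn L lmax lmin hlt hsub L' hL'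
end

section
/- Among all multisets of leaf levels {l_1,...,l_n} of full binary trees with n leaves, the quantity Σ_i 2^{l_i} (and hence the mean network AoI) is minimized when the tree is fully balanced, i.e., when all leaf levels are either ⌊log₂ n⌋ or ⌈log₂ n⌉. -/
/-!
As a function of `t = 2⁻ˡ`, the quantity `2ˡ = 1/t` is convex, and since no power of two lies
strictly between `2ᵐ` and `2ᵐ⁺¹` it stays above its secant through `t = 2⁻ᵐ` and `t = 2⁻ᵐ⁻¹`:
`2ˡ + 2²ᵐ⁺¹ · 2⁻ˡ ≥ 3 · 2ᵐ`, i.e. `(2ˡ - 2ᵐ)(2ˡ - 2ᵐ⁺¹) ≥ 0`, with equality for `l ∈ {m, m + 1}`.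
Summing over the `n` levels and using Kraft's equality gives `Σ 2^{lᵢ} ≥ 3 · 2ᵐ · n - 2²ᵐ⁺¹`
for every configuration, with equality for one whose levels lie in `{m, m + 1}`; take
`m = ⌊log₂ n⌋`.
-/

section SecantBound

variable {K : Type*} [Field K] [LinearOrder K] [IsStrictOrderedRing K]

theorem three_mul_le_add_two_mul_sq_mul_inv {x c : K} (hx : 0 < x)
    (h : x ∉ Set.Ioo c (2 * c)) : 3 * c ≤ x + 2 * c ^ 2 * x⁻¹ := by
  have hfactor : x + 2 * c ^ 2 * x⁻¹ - 3 * c = (x - c) * (x - 2 * c) / x := by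
    field_simp
    ring
  rw [← sub_nonneg, hfactor]
  refine div_nonneg ?_ hx.le
  rw [Set.mem_Ioo, not_and_or, not_lt, not_lt] at h
  rcases h with h | h
  · exact mul_nonneg_of_nonpos_of_nonpos (by linarith) (by linarith)
  · exact mul_nonneg (by linarith) (by linarith)

theorem add_two_mul_sq_mul_inv_eq {x c : K} (hc : c ≠ 0) (h : x = c ∨ x = 2 * c) :
    x + 2 * c ^ 2 * x⁻¹ = 3 * c := by
  rcases h with rfl | rfl <;> field_simp <;> ring

theorem two_pow_notMem_Ioo (m l : ℕ) : (2 : K) ^ l ∉ Set.Ioo (2 ^ m) (2 * 2 ^ m) := by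
  rintro ⟨hlo, hhi⟩
  have hml : m < l := (pow_lt_pow_iff_right₀ one_lt_two).1 hlo
  rw [← pow_succ'] at hhi
  exact (pow_le_pow_right₀ one_le_two hml).not_gt hhi

namespace Multiset

theorem three_mul_two_pow_mul_card_le (L : Multiset ℕ) (m : ℕ) :
    3 * 2 ^ m * (card L : K) ≤
      (L.map fun l => (2 : K) ^ l).sum + 2 * (2 ^ m) ^ 2 * (L.map fun l => ((2 : K) ^ l)⁻¹).sum := by
  rw [← sum_map_mul_left, ← sum_map_add, mul_comm, ← nsmul_eq_mul,
    ← card_map (fun l => (2 : K) ^ l + 2 * (2 ^ m) ^ 2 * ((2 : K) ^ l)⁻¹) L]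
  refine card_nsmul_le_sum fun x hx => ?_
  obtain ⟨l, -, rfl⟩ := mem_map.1 hx
  exact three_mul_le_add_two_mul_sq_mul_inv (by positivity) (two_pow_notMem_Ioo m l)

theorem sum_two_pow_add_eq_three_mul_two_pow_mul_card (B : Multiset ℕ) (m : ℕ)
    (hB : ∀ l ∈ B, l = m ∨ l = m + 1) :
    (B.map fun l => (2 : K) ^ l).sum + 2 * (2 ^ m) ^ 2 * (B.map fun l => ((2 : K) ^ l)⁻¹).sum =
      3 * 2 ^ m * (card B : K) := by
  rw [← sum_map_mul_left, ← sum_map_add,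
    map_congr rfl fun l hl => add_two_mul_sq_mul_inv_eq (by positivity) ?_,
    map_const', sum_replicate, nsmul_eq_mul, mul_comm]
  rcases hB l hl with rfl | rfl
  · exact Or.inl rfl
  · exact Or.inr (pow_succ' 2 _)

end Multiset

end SecantBound

theorem Nat.clog_le_log_add_one (b n : ℕ) : Nat.clog b n ≤ Nat.log b n + 1 := by
  rcases le_or_gt b 1 with hb | hb
  · simp [Nat.clog_of_left_le_one hb]
  · exact Nat.clog_le_of_le_pow (Nat.lt_pow_succ_log_self hb n).le

theorem balanced_tree_minimizes_sum_general (n : ℕ)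
    (L B : Multiset ℕ)
    (hLcard : L.card = n)
    (hLkraft : (L.map (fun l => ((2 : ℚ) ^ l)⁻¹)).sum = 1)
    (hBcard : B.card = n)
    (hBkraft : (B.map (fun l => ((2 : ℚ) ^ l)⁻¹)).sum = 1)
    (hBbal : ∀ l ∈ B, l = Nat.log 2 n ∨ l = Nat.clog 2 n) :
    (B.map (fun l => (2 : ℕ) ^ l)).sum ≤ (L.map (fun l => (2 : ℕ) ^ l)).sum := by
  set m := Nat.log 2 n
  have hB : ∀ l ∈ B, l = m ∨ l = m + 1 := fun l hl => by
    have := Nat.log_le_clog 2 n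
    have := Nat.clog_le_log_add_one 2 n
    rcases hBbal l hl with h | h <;> omega
  have hLbound := L.three_mul_two_pow_mul_card_le (K := ℚ) m
  have hBeq := B.sum_two_pow_add_eq_three_mul_two_pow_mul_card (K := ℚ) m hB
  rw [hLkraft, hLcard] at hLbound
  rw [hBkraft, hBcard] at hBeq
  suffices ((B.map (fun l => (2 : ℕ) ^ l)).sum : ℚ) ≤ (L.map (fun l => (2 : ℕ) ^ l)).sum by
    exact_mod_cast this
  push_cast [Nat.cast_multiset_sum, Multiset.map_map, Function.comp_def]
  linarith

/-- Among all leaf-level multisets of full binary trees with `n` leaves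
(equivalently, multisets of positive integers with Kraft sum 1), the quantity
`Σ 2^{l_i}` is minimized by any fully balanced configuration, i.e. one whose
levels all lie in `{⌊log₂ n⌋, ⌈log₂ n⌉}`. -/
theorem balanced_tree_minimizes_sum (n : ℕ) (hn : 2 ≤ n)
    (L B : Multiset ℕ)
    (hLpos : ∀ l ∈ L, 1 ≤ l) (hLcard : L.card = n)
    (hLkraft : (L.map (fun l => ((2 : ℚ) ^ l)⁻¹)).sum = 1)
    (hBpos : ∀ l ∈ B, 1 ≤ l) (hBcard : B.card = n)
    (hBkraft : (B.map (fun l => ((2 : ℚ) ^ l)⁻¹)).sum = 1)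
    (hBbal : ∀ l ∈ B, l = Nat.log 2 n ∨ l = Nat.clog 2 n) :
    (B.map (fun l => (2 : ℕ) ^ l)).sum ≤ (L.map (fun l => (2 : ℕ) ^ l)).sum :=
  balanced_tree_minimizes_sum_general n L B hLcard hLkraft hBcard hBkraft hBbal
end

section
/- Among all multisets {l_1,...,l_n} of positive integers with Σ_i 2^{-l_i} = 1, the quantity Σ_i 2^{l_i} is maximized by the skewed configuration {1, 2, ..., n−1, n−1}, achieving value 3·2^{n−1} − 2. -/
/-!
A multiset of levels with Kraft sum `1` and at least two elements contains its largest level `M`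
at least twice: clearing denominators gives `Σ 2^(M - l) = 2^M`, an even number in which every
term with `l < M` is even. Merging two copies of `M` into one `M - 1` keeps the Kraft
sum, so every such multiset arises from `{0}` by repeatedly splitting a level `m` into two levels
`m + 1`. A split raises `Σ 2^l` by `3·2^m`, and a level of an `n`-element profile is at most
`n - 1`, so by induction `Σ 2^l + 2 ≤ 3·2^(n-1)`. The skewed profile always splits its deepest
level and attains this bound.
-/

open Multiset

def kraftSum (L : Multiset ℕ) : ℚ := (L.map fun l => ((2 : ℚ) ^ l)⁻¹).sum

@[simp]
lemma kraftSum_zero : kraftSum 0 = 0 := by simp [kraftSum]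

@[simp]
lemma kraftSum_cons (l : ℕ) (L : Multiset ℕ) :
    kraftSum (l ::ₘ L) = ((2 : ℚ) ^ l)⁻¹ + kraftSum L := by
  simp [kraftSum]

lemma kraftSum_succ_cons_succ_cons (m : ℕ) (R : Multiset ℕ) :
    kraftSum ((m + 1) ::ₘ (m + 1) ::ₘ R) = kraftSum (m ::ₘ R) := by
  simp only [kraftSum_cons, pow_succ]
  ring

lemma sum_map_two_pow_succ_cons_succ_cons (m : ℕ) (R : Multiset ℕ) :
    (((m + 1) ::ₘ (m + 1) ::ₘ R).map (2 ^ ·)).sum =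
      ((m ::ₘ R).map (2 ^ ·)).sum + 3 * 2 ^ m := by
  simp only [map_cons, sum_cons, pow_succ]
  ring

lemma sum_map_two_pow_sub_eq_of_kraftSum_eq_one {L : Multiset ℕ} {M : ℕ}
    (hle : ∀ l ∈ L, l ≤ M) (h : kraftSum L = 1) :
    (L.map fun l => 2 ^ (M - l)).sum = 2 ^ M := by
  have hscaled : ((L.map fun l => (2 : ℕ) ^ (M - l)).sum : ℚ) = 2 ^ M * kraftSum L := by
    rw [kraftSum, ← sum_map_mul_left, Nat.cast_multiset_sum, map_map]
    refine congrArg sum (map_congr rfl fun l hl => ?_)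
    simp [pow_sub₀ (2 : ℚ) two_ne_zero (hle l hl)]
  rw [h, mul_one] at hscaled
  exact_mod_cast hscaled

lemma mem_of_sum_map_two_pow_sub_cons_eq {M : ℕ} {R : Multiset ℕ} (hM : M ≠ 0)
    (hle : ∀ l ∈ R, l ≤ M) (h : ((M ::ₘ R).map fun l => 2 ^ (M - l)).sum = 2 ^ M) :
    M ∈ R := by
  by_contra hMR
  have hR : 2 ∣ (R.map fun l => 2 ^ (M - l)).sum := by
    refine dvd_sum fun x hx => ?_
    obtain ⟨l, hl, rfl⟩ := mem_map.1 hx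
    have : l ≠ M := fun hlM => hMR (hlM ▸ hl)
    exact dvd_pow_self 2 (by have := hle l hl; omega)
  have hpow : 2 ∣ 2 ^ M := dvd_pow_self 2 hM
  rw [map_cons, sum_cons, Nat.sub_self, pow_zero] at h
  omega

lemma exists_eq_succ_cons_succ_cons_of_kraftSum_eq_one {L : Multiset ℕ} (h : kraftSum L = 1)
    (hcard : 2 ≤ L.card) : ∃ m R, L = (m + 1) ::ₘ (m + 1) ::ₘ R := by
  obtain ⟨M, hML, hmax⟩ := exists_max_image id (s := L) (by rintro rfl; simp at hcard)
  have hint := sum_map_two_pow_sub_eq_of_kraftSum_eq_one hmax h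
  have hM : M ≠ 0 := by
    rintro rfl
    simp only [id_eq, zero_tsub, pow_zero, map_const', sum_replicate, smul_eq_mul, mul_one] at hint
    omega
  obtain ⟨R, rfl⟩ := exists_cons_of_mem hML
  have hMR := mem_of_sum_map_two_pow_sub_cons_eq hM (fun l hl => hmax l (mem_cons_of_mem hl)) hint
  obtain ⟨R', rfl⟩ := exists_cons_of_mem hMR
  obtain ⟨m, rfl⟩ := Nat.exists_eq_succ_of_ne_zero hM
  exact ⟨m, R', rfl⟩

lemma kraftSum_eq_one_induction {P : Multiset ℕ → Prop} (singleton : P {0})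
    (split : ∀ m R, kraftSum (m ::ₘ R) = 1 → P (m ::ₘ R) →
      P ((m + 1) ::ₘ (m + 1) ::ₘ R))
    {L : Multiset ℕ} (hL : kraftSum L = 1) : P L := by
  induction hn : L.card generalizing L with
  | zero => simp [card_eq_zero.1 hn] at hL
  | succ n ih =>
    rcases Nat.eq_zero_or_pos n with rfl | hn1
    · obtain ⟨l, rfl⟩ := card_eq_one.1 hn
      rw [kraftSum, map_singleton, sum_singleton, inv_eq_one] at hL
      obtain rfl : l = 0 :=
        pow_right_injective₀ two_pos (by norm_num) (hL.trans (pow_zero 2).symm)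
      exact singleton
    · obtain ⟨m, R, rfl⟩ := exists_eq_succ_cons_succ_cons_of_kraftSum_eq_one hL (by omega)
      rw [kraftSum_succ_cons_succ_cons] at hL
      exact split m R hL (ih hL (by simp only [card_cons] at hn ⊢; omega))

lemma lt_card_of_kraftSum_eq_one {L : Multiset ℕ} (hL : kraftSum L = 1) :
    ∀ l ∈ L, l < L.card := by
  refine kraftSum_eq_one_induction (P := fun L => ∀ l ∈ L, l < L.card) (by simp) ?_ hL
  intro m R _ ih l hl
  simp only [mem_cons, card_cons, forall_eq_or_imp] at ih hl ⊢
  rcases hl with rfl | rfl | hl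
  · omega
  · omega
  · have := ih.2 l hl
    omega

lemma sum_map_two_pow_add_two_le_of_kraftSum_eq_one {L : Multiset ℕ} (hL : kraftSum L = 1) :
    (L.map (2 ^ ·)).sum + 2 ≤ 3 * 2 ^ (L.card - 1) := by
  refine kraftSum_eq_one_induction
    (P := fun L => (L.map (2 ^ ·)).sum + 2 ≤ 3 * 2 ^ (L.card - 1)) (by simp) ?_ hL
  intro m R hK ih
  have hmR : m < R.card + 1 := by
    simpa using lt_card_of_kraftSum_eq_one hK m (mem_cons_self _ _)
  have hm : 2 ^ m ≤ 2 ^ R.card := Nat.pow_le_pow_right two_pos (by omega)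
  simp only [card_cons, Nat.add_sub_cancel] at ih ⊢
  rw [sum_map_two_pow_succ_cons_succ_cons, pow_succ]
  omega

def skewedProfile (k : ℕ) : Multiset ℕ := k ::ₘ (range k).map (· + 1)

lemma skewedProfile_succ (k : ℕ) :
    skewedProfile (k + 1) = (k + 1) ::ₘ (k + 1) ::ₘ (range k).map (· + 1) := by
  simp [skewedProfile, range_succ]

lemma kraftSum_skewedProfile (k : ℕ) : kraftSum (skewedProfile k) = 1 := by
  induction k with
  | zero => simp [skewedProfile, kraftSum]
  | succ k ih => rwa [skewedProfile_succ, kraftSum_succ_cons_succ_cons]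

lemma sum_map_two_pow_skewedProfile (k : ℕ) :
    ((skewedProfile k).map (2 ^ ·)).sum + 2 = 3 * 2 ^ k := by
  induction k with
  | zero => simp [skewedProfile]
  | succ k ih =>
    rw [skewedProfile_succ, sum_map_two_pow_succ_cons_succ_cons, pow_succ]
    rw [skewedProfile] at ih
    omega

/-- Among all multisets `{l_1,...,l_n}` of positive integers with `Σ 2^{-l_i} = 1`
(`n ≥ 2`), the quantity `Σ 2^{l_i}` is at most `3·2^{n-1} - 2`, and the skewed
configuration `{1, 2, ..., n-1, n-1}` satisfies the constraints and attains this value. -/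
theorem skewed_tree_maximizes_sum (n : ℕ) (hn : 2 ≤ n) :
    (∀ L : Multiset ℕ, (∀ l ∈ L, 1 ≤ l) → L.card = n →
      (L.map (fun l => ((2 : ℚ) ^ l)⁻¹)).sum = 1 →
      (L.map (fun l => (2 : ℕ) ^ l)).sum ≤ 3 * 2 ^ (n - 1) - 2) ∧
    (∀ S : Multiset ℕ, S = ((Multiset.range (n - 1)).map (· + 1)) + {n - 1} →
      (∀ l ∈ S, 1 ≤ l) ∧ S.card = n ∧
      (S.map (fun l => ((2 : ℚ) ^ l)⁻¹)).sum = 1 ∧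
      (S.map (fun l => (2 : ℕ) ^ l)).sum = 3 * 2 ^ (n - 1) - 2) := by
  refine ⟨fun L _ hcard hL => ?_, fun S hS => ?_⟩
  · have := sum_map_two_pow_add_two_le_of_kraftSum_eq_one hL
    rw [hcard] at this
    omega
  · obtain ⟨k, rfl⟩ : ∃ k, n = k + 1 := ⟨n - 1, by omega⟩
    obtain rfl : S = skewedProfile k := by
      rw [hS, skewedProfile, Nat.add_sub_cancel, add_comm, singleton_add]
    have hsum := sum_map_two_pow_skewedProfile k
    rw [Nat.add_sub_cancel]
    refine ⟨?_, by simp [skewedProfile], kraftSum_skewedProfile k, by omega⟩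
    simp only [skewedProfile, mem_cons, mem_map, mem_range]
    omega
end

section
/- For a settled tree where user i holds the leaf schedule at level l_i, the mean network AoI Δ̄ = (1/n) Σ_i (2^{l_i}+1)/2 satisfies Δ̄ ≥ (n+1)/2, with equality iff n is a power of two and all l_i = log₂ n. -/
/-!
Write `xᵢ = 2 ^ lᵢ`. The mean AoI is `(Σ xᵢ / n + 1) / 2`, so everything reduces to
`Σ xᵢ ≥ n²` under the Kraft equality `Σ xᵢ⁻¹ = 1`. That inequality, with its equality case,
comes from the sum-of-squares identity `Σ (xᵢ - n)² / xᵢ = Σ xᵢ - 2n·n + n²·Σ xᵢ⁻¹ = Σ xᵢ - n²`.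
-/

namespace Multiset

variable {s : Multiset ℝ}

theorem eq_zero_of_sum_eq_zero_of_nonneg (hs : ∀ x ∈ s, 0 ≤ x) (hsum : s.sum = 0) :
    ∀ x ∈ s, x = 0 := fun x hx =>
  le_antisymm (hsum ▸ single_le_sum hs x hx) (hs x hx)

theorem sum_map_sub_sq_div (c : ℝ) (hs : ∀ x ∈ s, x ≠ 0) :
    (s.map fun x => (x - c) ^ 2 / x).sum
      = s.sum - 2 * c * card s + c ^ 2 * (s.map (·⁻¹)).sum := by
  have expand : ∀ x ∈ s, (x - c) ^ 2 / x = x - 2 * c + c ^ 2 * x⁻¹ := fun x hx => by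
    field_simp [hs x hx]
    ring
  rw [map_congr rfl expand, sum_map_add, sum_map_sub, sum_map_mul_left, map_const',
    sum_replicate, nsmul_eq_mul, map_id', sum_map_mul_left]
  ring

theorem nonneg_of_mem_map_sub_sq_div (c : ℝ) (hs : ∀ x ∈ s, 0 < x) :
    ∀ y ∈ s.map (fun x => (x - c) ^ 2 / x), 0 ≤ y := fun _ hy => by
  obtain ⟨x, hx, rfl⟩ := mem_map.1 hy
  exact div_nonneg (sq_nonneg _) (hs x hx).le

section KraftEquality

variable (hs : ∀ x ∈ s, 0 < x) (hkraft : (s.map (·⁻¹)).sum = 1)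
include hs hkraft

theorem sum_map_sub_card_sq_div_of_sum_inv_eq_one :
    (s.map fun x => (x - (card s : ℝ)) ^ 2 / x).sum = s.sum - (card s : ℝ) ^ 2 := by
  rw [sum_map_sub_sq_div _ fun x hx => (hs x hx).ne', hkraft]
  ring

theorem card_sq_le_sum_of_sum_inv_eq_one : (card s : ℝ) ^ 2 ≤ s.sum := by
  linarith [sum_map_sub_card_sq_div_of_sum_inv_eq_one hs hkraft,
    sum_nonneg (nonneg_of_mem_map_sub_sq_div (card s : ℝ) hs)]

theorem sum_eq_card_sq_iff_of_sum_inv_eq_one :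
    s.sum = (card s : ℝ) ^ 2 ↔ ∀ x ∈ s, x = card s := by
  constructor
  · intro hsum x hx
    have hzero := eq_zero_of_sum_eq_zero_of_nonneg (nonneg_of_mem_map_sub_sq_div _ hs)
      (by rw [sum_map_sub_card_sq_div_of_sum_inv_eq_one hs hkraft, hsum, sub_self])
      _ (mem_map_of_mem _ hx)
    rw [div_eq_zero_iff, or_iff_left (hs x hx).ne', sq_eq_zero_iff, sub_eq_zero] at hzero
    exact hzero
  · intro hall
    rw [eq_replicate_card.2 hall, sum_replicate, card_replicate, nsmul_eq_mul, sq]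

end KraftEquality

end Multiset

theorem sum_map_two_pow_add_one_div_two (L : Multiset ℕ) :
    (L.map fun l => ((2 : ℝ) ^ l + 1) / 2).sum
      = ((L.map fun l => (2 : ℝ) ^ l).sum + L.card) / 2 := by
  rw [Multiset.sum_map_div, Multiset.sum_map_add, Multiset.map_const', Multiset.sum_replicate,
    nsmul_one]

theorem one_div_mul_add_div_two_eq {n : ℝ} (hn : n ≠ 0) (S : ℝ) :
    1 / n * ((S + n) / 2) = (n + 1) / 2 + (S - n ^ 2) / (2 * n) := by
  field_simp
  ring

theorem settled_tree_aoi_lower_bound_general (n : ℕ)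
    (L : Multiset ℕ) (hcard : L.card = n)
    (hkraft : (L.map (fun l => ((2 : ℚ) ^ l)⁻¹)).sum = 1) :
    ((n : ℝ) + 1) / 2 ≤ (1 / n) * (L.map (fun l => ((2 : ℝ) ^ l + 1) / 2)).sum ∧
    ((1 / (n : ℝ)) * (L.map (fun l => ((2 : ℝ) ^ l + 1) / 2)).sum = ((n : ℝ) + 1) / 2
      ↔ ∀ l ∈ L, 2 ^ l = n) := by
  set s := L.map fun l => (2 : ℝ) ^ l
  have hs_pos : ∀ x ∈ s, 0 < x := fun _ hx => by
    obtain ⟨l, -, rfl⟩ := Multiset.mem_map.1 hx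
    positivity
  have hs_card : (Multiset.card s : ℝ) = n := by rw [Multiset.card_map, hcard]
  have hs_kraft : (s.map (·⁻¹)).sum = 1 := by
    simpa [s, Multiset.map_map, Function.comp_def] using congrArg (Rat.cast : ℚ → ℝ) hkraft
  have hn : (n : ℝ) ≠ 0 := by
    rw [Nat.cast_ne_zero, ← hcard, Ne, Multiset.card_eq_zero]
    rintro rfl
    simp at hkraft
  have hbound := Multiset.card_sq_le_sum_of_sum_inv_eq_one hs_pos hs_kraft
  have hiff := Multiset.sum_eq_card_sq_iff_of_sum_inv_eq_one hs_pos hs_kraft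
  rw [hs_card] at hbound hiff
  rw [sum_map_two_pow_add_one_div_two, hcard, one_div_mul_add_div_two_eq hn]
  refine ⟨le_add_of_nonneg_right (div_nonneg (sub_nonneg.2 hbound) (by positivity)), ?_⟩
  rw [add_eq_left, div_eq_zero_iff, or_iff_left (mul_ne_zero two_ne_zero hn), sub_eq_zero, hiff,
    Multiset.forall_mem_map_iff]
  exact forall₂_congr fun l _ => by norm_cast

/-- For a settled tree with leaf levels `l_i` satisfying the Kraft equality,
the mean network AoI `(1/n) Σ (2^{l_i}+1)/2` is at least `(n+1)/2`, with equality
iff `n` is a power of two and all levels equal `log₂ n` (i.e. `2^{l_i} = n` for all `i`). -/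
theorem settled_tree_aoi_lower_bound (n : ℕ) (hn : 2 ≤ n)
    (L : Multiset ℕ) (hpos : ∀ l ∈ L, 1 ≤ l) (hcard : L.card = n)
    (hkraft : (L.map (fun l => ((2 : ℚ) ^ l)⁻¹)).sum = 1) :
    ((n : ℝ) + 1) / 2 ≤ (1 / n) * (L.map (fun l => ((2 : ℝ) ^ l + 1) / 2)).sum ∧
    ((1 / (n : ℝ)) * (L.map (fun l => ((2 : ℝ) ^ l + 1) / 2)).sum = ((n : ℝ) + 1) / 2
      ↔ ∀ l ∈ L, 2 ^ l = n) :=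
  settled_tree_aoi_lower_bound_general n L hcard hkraft
end

section
/- In a full binary tree with n ≥ 2 leaves that is not fully balanced (i.e., l_max − l_min ≥ 2 among leaf levels), there exist two sibling leaves at level l_max and a leaf at level l_min, so the balancing operation of Theorem 1 is applicable and strictly decreases Σ 2^{l_i}. -/
/-!
Clearing denominators in the Kraft equality gives `Σ 2^(l_max - l_i) = 2^(l_max)`. Modulo 2 the
left side counts the leaves at depth `l_max`, and the right side is even, so that count is even
and hence at least two. The operation then trades `2^(l_max) + 2^(l_max) + 2^(l_min)` for
`2^(l_max - 1) + 2^(l_min + 1) + 2^(l_min + 1)`, which is smaller since `l_min + 2 ≤ l_max`.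
-/

namespace Multiset

theorem sum_map_two_pow_sub_eq_of_kraft {L : Multiset ℕ} {m : ℕ} (hle : ∀ l ∈ L, l ≤ m)
    (hkraft : (L.map fun l => ((2 : ℚ) ^ l)⁻¹).sum = 1) :
    (L.map fun l => 2 ^ (m - l)).sum = 2 ^ m := by
  have hscaled : L.map (fun l => ((2 ^ (m - l) : ℕ) : ℚ)) =
      L.map fun l => (2 : ℚ) ^ m * ((2 : ℚ) ^ l)⁻¹ :=
    map_congr rfl fun l hl => by push_cast; rw [pow_sub₀ 2 two_ne_zero (hle l hl)]
  have hcast : ((L.map fun l => (2 ^ (m - l) : ℕ)).sum : ℚ) = 2 ^ m := by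
    rw [Nat.cast_multiset_sum, map_map, Function.comp_def, hscaled, sum_map_mul_left, hkraft,
      mul_one]
  exact_mod_cast hcast

theorem sum_map_two_pow_sub_mod_two {L : Multiset ℕ} {m : ℕ} (hle : ∀ l ∈ L, l ≤ m) :
    (L.map fun l => 2 ^ (m - l)).sum % 2 = L.count m % 2 := by
  induction L using Multiset.induction_on with
  | empty => simp
  | cons a L ih =>
    rw [map_cons, sum_cons, count_cons, Nat.add_mod, ih fun l hl => hle l (mem_cons_of_mem hl)]
    rcases (hle a (mem_cons_self a L)).lt_or_eq with hlt | rfl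
    · rw [Nat.pow_mod, Nat.zero_pow (by omega), if_neg hlt.ne']
      simp
    · simp [Nat.add_comm]

theorem two_le_count_max_of_kraft {L : Multiset ℕ} {m : ℕ} (hm : m ∈ L) (hpos : 1 ≤ m)
    (hle : ∀ l ∈ L, l ≤ m) (hkraft : (L.map fun l => ((2 : ℚ) ^ l)⁻¹).sum = 1) :
    2 ≤ L.count m := by
  have heven : L.count m % 2 = 0 := by
    rw [← sum_map_two_pow_sub_mod_two hle, sum_map_two_pow_sub_eq_of_kraft hle hkraft,
      Nat.pow_mod, Nat.zero_pow hpos]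
  have := count_pos.mpr hm
  omega

theorem insert_insert_singleton_le {α : Type*} [DecidableEq α] {L : Multiset α} {a b : α}
    (hab : a ≠ b) (ha : 2 ≤ L.count a) (hb : b ∈ L) : ({a, a, b} : Multiset α) ≤ L := by
  rw [le_iff_count]
  intro x
  simp only [insert_eq_cons, count_cons, count_singleton]
  have := count_pos.mpr hb
  grind

theorem sum_map_sub_add_lt {α β : Type*} [DecidableEq α] [AddCommMonoid β] [PartialOrder β]
    [IsOrderedCancelAddMonoid β] {L s t : Multiset α} {f : α → β} (hs : s ≤ L)
    (hlt : (t.map f).sum < (s.map f).sum) : ((L - s + t).map f).sum < (L.map f).sum := by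
  conv_rhs => rw [← Multiset.sub_add_cancel hs]
  simp only [map_add, sum_add]
  exact add_lt_add_right hlt _

end Multiset

theorem two_pow_balancing_lt {a b : ℕ} (h : a + 2 ≤ b) :
    2 ^ (b - 1) + (2 ^ (a + 1) + 2 ^ (a + 1)) < 2 ^ b + (2 ^ b + 2 ^ a) := by
  have hdouble : 2 ^ (a + 1) + 2 ^ (a + 1) = 2 ^ (a + 2) := by ring
  have hpos : 0 < 2 ^ a := Nat.two_pow_pos a
  have hmono : 2 ^ (a + 2) ≤ 2 ^ b := Nat.pow_le_pow_right two_pos h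
  have hhalf : 2 ^ (b - 1) < 2 ^ b := Nat.pow_lt_pow_right one_lt_two (by omega)
  omega

theorem balancing_applicable_and_strict_general
    (L : Multiset ℕ)
    (hkraft : (L.map (fun l => ((2 : ℚ) ^ l)⁻¹)).sum = 1)
    (lmax lmin : ℕ)
    (hmaxmem : lmax ∈ L) (hmax : ∀ l ∈ L, l ≤ lmax)
    (hminmem : lmin ∈ L)
    (hgap : lmin + 2 ≤ lmax) :
    ({lmax, lmax, lmin} : Multiset ℕ) ≤ L ∧
    (((L - {lmax, lmax, lmin}) + {lmax - 1, lmin + 1, lmin + 1}).map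
        (fun l => (2 : ℕ) ^ l)).sum
      < (L.map (fun l => (2 : ℕ) ^ l)).sum := by
  have hcount := Multiset.two_le_count_max_of_kraft hmaxmem (by omega) hmax hkraft
  have hsub := Multiset.insert_insert_singleton_le (by omega) hcount hminmem
  refine ⟨hsub, Multiset.sum_map_sub_add_lt hsub ?_⟩
  simpa using two_pow_balancing_lt hgap

/-- In a full binary tree with `n ≥ 2` leaves that is not fully balanced
(`l_max − l_min ≥ 2` among the leaf levels), the multiset of leaf levels contains two
copies of `l_max` and one copy of `l_min`, so the balancing operation is applicable,
and it strictly decreases `Σ 2^{l_i}`. -/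
theorem balancing_applicable_and_strict (n : ℕ) (hn : 2 ≤ n)
    (L : Multiset ℕ) (hpos : ∀ l ∈ L, 1 ≤ l) (hcard : L.card = n)
    (hkraft : (L.map (fun l => ((2 : ℚ) ^ l)⁻¹)).sum = 1)
    (lmax lmin : ℕ)
    (hmaxmem : lmax ∈ L) (hmax : ∀ l ∈ L, l ≤ lmax)
    (hminmem : lmin ∈ L) (hmin : ∀ l ∈ L, lmin ≤ l)
    (hgap : lmin + 2 ≤ lmax) :
    ({lmax, lmax, lmin} : Multiset ℕ) ≤ L ∧
    (((L - {lmax, lmax, lmin}) + {lmax - 1, lmin + 1, lmin + 1}).map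
        (fun l => (2 : ℕ) ^ l)).sum
      < (L.map (fun l => (2 : ℕ) ^ l)).sum :=
  balancing_applicable_and_strict_general L hkraft lmax lmin hmaxmem hmax hminmem hgap
end
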